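/- arXiv:1902.04104 — 2 statements merged into one kernel-verified Lean document; each statement's English description precedes it below -/
import Mathlib

section
/- Negligible middle-time occupation for the Brownian bridge: let d ≥ 3, let V: ℝ^d → [0,∞) be bounded, measurable and compactly supported, and fix a > 0. Let (T_n) and (m_n) be sequences with T_n → ∞, m_n → ∞, m_n ≤ T_n/2 and m_n/T_n → 0. Then P(∫_{m_n}^{T_n − m_n} V(√2 X^{(T_n)}_s) ds > a) → 0 as n → ∞. -/
/-!
Markov's inequality and Tonelli reduce the claim to a bound on the expected occupation time
`∫_{m}^{T-m} P(|X_s| ≤ R) ds` of a ball containing the support of `V`. At time `s` the bridge is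
`(1 - s/T) (W_s - W_0) - (s/T) (W_T - W_s)`, a combination of two independent increments in which
one coefficient is at least `1/2` in absolute value. Conditioning on the other increment, three
independent Gaussian coordinates of variance `min(s, T - s)` must each fall into an interval of
length at most `4R`, which has probability `O(min(s, T - s)^{-3/2})`. Since `d ≥ 3` this is
integrable at infinity, so the expected occupation is `O(m^{-1/2})` uniformly in `T`.
-/

open MeasureTheory ProbabilityTheory Filter ENNReal
open scoped NNReal

noncomputable section

/-- Extended-real exponential: `expENN a = exp a` for finite `a`, and `expENN ∞ = ∞`. -/
def expENN (a : ℝ≥0∞) : ℝ≥0∞ :=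
  if a = ∞ then ∞ else ENNReal.ofReal (Real.exp a.toReal)

/-- A standard `d`-dimensional Brownian motion started at `0` under the probability
measure `P`: an a.s. continuous process with `W 0 = 0` a.s., with independent increments,
such that for `0 ≤ s ≤ t` the increment `W t - W s` is a centered Gaussian vector with
covariance `(t - s) · Id`, i.e. its coordinates are independent centered real Gaussians
of variance `t - s`. -/
structure IsBrownianMotion {Ω : Type*} [MeasurableSpace Ω] (d : ℕ)
    (P : Measure Ω) (W : ℝ → Ω → EuclideanSpace ℝ (Fin d)) : Prop where
  isProb : IsProbabilityMeasure P
  meas : ∀ s : ℝ, Measurable (W s)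
  cont : ∀ᵐ ω ∂P, Continuous fun s => W s ω
  init : ∀ᵐ ω ∂P, W 0 ω = 0
  indep_incr : ∀ (n : ℕ) (t : Fin (n + 1) → ℝ), Monotone t → 0 ≤ t 0 →
    iIndepFun
      (fun i : Fin n => fun ω => W (t i.succ) ω - W (t i.castSucc) ω) P
  gauss_incr : ∀ s t : ℝ, 0 ≤ s → s ≤ t → ∀ i : Fin d,
    Measure.map (fun ω => (W t ω - W s ω) i) P = gaussianReal 0 (Real.toNNReal (t - s))
  coord_indep : ∀ s t : ℝ, 0 ≤ s → s ≤ t →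
    iIndepFun (fun i : Fin d => fun ω => (W t ω - W s ω) i) P

namespace ProbabilityTheory

lemma gaussianPDFReal_le (μ : ℝ) (v : ℝ≥0) (x : ℝ) :
    gaussianPDFReal μ v x ≤ (√(2 * Real.pi * v))⁻¹ := by
  rw [gaussianPDFReal]
  refine mul_le_of_le_one_right (by positivity) (Real.exp_le_one_iff.2 ?_)
  exact div_nonpos_of_nonpos_of_nonneg (neg_nonpos.2 (sq_nonneg _)) (by positivity)

lemma gaussianReal_Icc_le (μ : ℝ) {v : ℝ≥0} (hv : v ≠ 0) (lo hi : ℝ) :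
    gaussianReal μ v (Set.Icc lo hi) ≤ ENNReal.ofReal ((hi - lo) / √v) := by
  have hv_pos : (0 : ℝ) < v := by positivity
  have hpdf (x : ℝ) : gaussianPDF μ v x ≤ ENNReal.ofReal (√v)⁻¹ := by
    refine ENNReal.ofReal_le_ofReal ((gaussianPDFReal_le μ v x).trans ?_)
    gcongr
    nlinarith [Real.pi_gt_three]
  calc gaussianReal μ v (Set.Icc lo hi) = ∫⁻ x in Set.Icc lo hi, gaussianPDF μ v x :=
        gaussianReal_apply μ hv _
    _ ≤ ∫⁻ _ in Set.Icc lo hi, ENNReal.ofReal (√v)⁻¹ := lintegral_mono hpdf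
    _ = ENNReal.ofReal ((hi - lo) / √v) := by
        rw [setLIntegral_const, Real.volume_Icc, ← ENNReal.ofReal_mul (by positivity),
          inv_mul_eq_div]

lemma iIndepFun.measure_forall_mem_Icc_le {Ω ι : Type*} [MeasurableSpace Ω] [Fintype ι]
    {P : Measure Ω} [IsProbabilityMeasure P] {Y : ι → Ω → ℝ} (hY : iIndepFun Y P)
    (hY_meas : ∀ i, Measurable (Y i)) {μ : ι → ℝ} {v : ℝ≥0} (hv : v ≠ 0)
    (hY_law : ∀ i, P.map (Y i) = gaussianReal (μ i) v) {lo hi : ι → ℝ} {L : ℝ}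
    (hL : ∀ i, hi i - lo i ≤ L) {k : ℕ} (hk : k ≤ Fintype.card ι) :
    P {ω | ∀ i, Y i ω ∈ Set.Icc (lo i) (hi i)} ≤ ENNReal.ofReal (L / √v) ^ k := by
  set c := ENNReal.ofReal (L / √v)
  have hcoord (i : ι) : P (Y i ⁻¹' Set.Icc (lo i) (hi i)) ≤ min 1 c := by
    refine le_min prob_le_one ?_
    rw [← Measure.map_apply (hY_meas i) measurableSet_Icc, hY_law i]
    exact (gaussianReal_Icc_le _ hv _ _).trans (ENNReal.ofReal_le_ofReal (by gcongr; exact hL i))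
  calc P {ω | ∀ i, Y i ω ∈ Set.Icc (lo i) (hi i)}
      = ∏ i, P (Y i ⁻¹' Set.Icc (lo i) (hi i)) := by
        rw [← hY.measure_inter_preimage_eq_mul Finset.univ fun i _ => measurableSet_Icc]
        congr 1
        ext ω
        simp
    _ ≤ min 1 c ^ Fintype.card ι := Finset.prod_le_pow_card _ _ _ fun i _ => hcoord i
    _ ≤ min 1 c ^ k := pow_le_pow_of_le_one zero_le (min_le_left _ _) hk
    _ ≤ c ^ k := by gcongr; exact min_le_right _ _

lemma IndepFun.measure_prodMk_mem_le {Ω α β : Type*} [MeasurableSpace Ω] [MeasurableSpace α]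
    [MeasurableSpace β] {P : Measure Ω} [IsProbabilityMeasure P] {X : Ω → α} {Y : Ω → β}
    (hXY : IndepFun X Y P) (hX : Measurable X) (hY : Measurable Y) {S : Set (α × β)}
    (hS : MeasurableSet S) {c : ℝ≥0∞} (hc : ∀ x, P (Y ⁻¹' {y | (x, y) ∈ S}) ≤ c) :
    P {ω | (X ω, Y ω) ∈ S} ≤ c := by
  have hlaw := (indepFun_iff_map_prod_eq_prod_map_map hX.aemeasurable hY.aemeasurable).1 hXY
  have := Measure.isProbabilityMeasure_map (μ := P) hX.aemeasurable
  calc P {ω | (X ω, Y ω) ∈ S} = (P.map X).prod (P.map Y) S := by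
        rw [← hlaw, Measure.map_apply (hX.prodMk hY) hS]
        rfl
    _ = ∫⁻ x, P (Y ⁻¹' {y | (x, y) ∈ S}) ∂P.map X := by
        rw [Measure.prod_apply hS]
        refine lintegral_congr fun x => ?_
        exact Measure.map_apply hY (measurable_prodMk_left hS)
    _ ≤ ∫⁻ _, c ∂P.map X := lintegral_mono hc
    _ = c := by simp

end ProbabilityTheory

lemma measure_smul_add_smul_mem_closedBall_le {Ω ι : Type*} [MeasurableSpace Ω] [Fintype ι]
    {P : Measure Ω} [IsProbabilityMeasure P] {A B : Ω → EuclideanSpace ℝ ι}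
    (hA : Measurable A) (hB : Measurable B) (hBA : IndepFun B A P)
    (hA_indep : iIndepFun (fun i ω => A ω i) P) {v : ℝ≥0} (hv : v ≠ 0)
    (hA_law : ∀ i, P.map (fun ω => A ω i) = gaussianReal 0 v) {α : ℝ} (hα : α ≠ 0)
    (β R : ℝ) {k : ℕ} (hk : k ≤ Fintype.card ι) :
    P {ω | α • A ω + β • B ω ∈ Metric.closedBall 0 R}
      ≤ ENNReal.ofReal (2 * R / |α| / √v) ^ k := by
  have hS : MeasurableSet
      {p : EuclideanSpace ℝ ι × EuclideanSpace ℝ ι | α • p.2 + β • p.1 ∈ Metric.closedBall 0 R} :=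
    measurableSet_closedBall.preimage (by fun_prop)
  refine hBA.measure_prodMk_mem_le hB hA hS fun b => ?_
  set center : ι → ℝ := fun i => -(β * b i) / α
  set r := R / |α|
  refine (measure_mono fun ω hω => ?_).trans <| hA_indep.measure_forall_mem_Icc_le
    (fun i => by fun_prop) hv hA_law (lo := center - fun _ => r) (hi := center + fun _ => r)
    (L := 2 * R / |α|) (fun i => le_of_eq (by simp only [Pi.add_apply, Pi.sub_apply]; ring)) hk
  intro i
  have hcoord : |α * A ω i + β * b i| ≤ R := by
    have := (PiLp.norm_apply_le (α • A ω + β • b) i).trans (mem_closedBall_zero_iff.1 hω)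
    simpa using this
  have hdist : |A ω i - center i| ≤ r := by
    rw [show A ω i - center i = (α * A ω i + β * b i) / α by simp only [center]; field_simp; ring,
      abs_div]
    exact div_le_div_of_nonneg_right hcoord (abs_nonneg α)
  simp only [Set.mem_Icc, Pi.add_apply, Pi.sub_apply]
  constructor <;> linarith [abs_sub_le_iff.1 hdist]

lemma div_sqrt_pow_three (c : ℝ) {v : ℝ} (hv : 0 ≤ v) :
    (c / √v) ^ 3 = c ^ 3 * v ^ (-(3 / 2) : ℝ) := by
  have hsqrt : √v ^ 3 = v ^ (3 / 2 : ℝ) := by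
    rw [Real.sqrt_eq_rpow, ← Real.rpow_natCast, ← Real.rpow_mul hv]
    norm_num
  rw [div_pow, hsqrt, Real.rpow_neg hv, div_eq_mul_inv]

lemma lintegral_Ici_rpow {r : ℝ} (hr : r < -1) {m : ℝ} (hm : 0 < m) :
    ∫⁻ s in Set.Ici m, ENNReal.ofReal (s ^ r) = ENNReal.ofReal (-m ^ (r + 1) / (r + 1)) := by
  rw [← Measure.restrict_congr_set Ioi_ae_eq_Ici, ← integral_Ioi_rpow_of_lt hr hm,
    ofReal_integral_eq_lintegral_ofReal (integrableOn_Ioi_rpow_of_lt hr hm)]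
  filter_upwards [ae_restrict_mem measurableSet_Ioi] with s hs
  exact Real.rpow_nonneg (hm.trans hs).le r

lemma lintegral_Ioc_rpow_add_rpow_le {r : ℝ} (hr : r < -1) {m : ℝ} (hm : 0 < m) (T : ℝ) :
    ∫⁻ s in Set.Ioc m (T - m), ENNReal.ofReal (s ^ r + (T - s) ^ r)
      ≤ ENNReal.ofReal (2 * (-m ^ (r + 1) / (r + 1))) := by
  set f : ℝ → ℝ≥0∞ := fun s => ENNReal.ofReal (s ^ r)
  have hf : Measurable f := by fun_prop
  have hI : 0 ≤ -m ^ (r + 1) / (r + 1) :=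
    div_nonneg_of_nonpos (neg_nonpos.2 (by positivity)) (by linarith)
  have hleft : ∫⁻ s in Set.Ioc m (T - m), f s ≤ ∫⁻ s in Set.Ici m, f s :=
    lintegral_mono_set (Set.Ioc_subset_Ioi_self.trans Set.Ioi_subset_Ici_self)
  -- reflect `s ↦ T - s`, which maps `Ioc m (T - m)` into `Ici m`
  have hright : ∫⁻ s in Set.Ioc m (T - m), f (T - s) ≤ ∫⁻ s in Set.Ici m, f s := by
    calc ∫⁻ s in Set.Ioc m (T - m), f (T - s)
        ≤ ∫⁻ s, (Set.Ici m).indicator f (T - s) := by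
          rw [← lintegral_indicator measurableSet_Ioc]
          refine lintegral_mono fun s => ?_
          by_cases hs : s ∈ Set.Ioc m (T - m)
          · rw [Set.indicator_of_mem hs, Set.indicator_of_mem (Set.mem_Ici.2 (by linarith [hs.2]))]
          · simp [Set.indicator_of_notMem hs]
      _ = ∫⁻ s in Set.Ici m, f s := by
          rw [lintegral_sub_left_eq_self, lintegral_indicator measurableSet_Ici]
  calc ∫⁻ s in Set.Ioc m (T - m), ENNReal.ofReal (s ^ r + (T - s) ^ r)
      ≤ ∫⁻ s in Set.Ioc m (T - m), (f s + f (T - s)) :=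
        lintegral_mono fun s => ENNReal.ofReal_add_le
    _ ≤ (∫⁻ s in Set.Ici m, f s) + ∫⁻ s in Set.Ici m, f s :=
        (lintegral_add_left hf _).trans_le (add_le_add hleft hright)
    _ = ENNReal.ofReal (2 * (-m ^ (r + 1) / (r + 1))) := by
        rw [lintegral_Ici_rpow hr hm, two_mul, ENNReal.ofReal_add hI hI]

lemma support_comp_smul_subset_closedBall {E F : Type*} [SeminormedAddCommGroup E]
    [NormedSpace ℝ E] [Zero F] {V : E → F} {R c : ℝ}
    (hV : Function.support V ⊆ Metric.closedBall 0 R) (hc : 1 ≤ |c|) :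
    Function.support (fun x => V (c • x)) ⊆ Metric.closedBall 0 R := by
  intro x hx
  have hcx := mem_closedBall_zero_iff.1 (hV hx)
  rw [norm_smul, Real.norm_eq_abs] at hcx
  exact mem_closedBall_zero_iff.2 ((le_mul_of_one_le_left (norm_nonneg x) hc).trans hcx)

lemma lintegral_ofReal_comp_le {Ω E : Type*} [MeasurableSpace Ω] [MeasurableSpace E]
    {P : Measure Ω} {X : Ω → E} (hX : Measurable X) {U : E → ℝ} {M : ℝ} (hUM : ∀ x, U x ≤ M)
    {K : Set E} (hK : MeasurableSet K) (hUK : Function.support U ⊆ K) :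
    ∫⁻ ω, ENNReal.ofReal (U (X ω)) ∂P ≤ ENNReal.ofReal M * P (X ⁻¹' K) := by
  rw [← lintegral_indicator_const (hX hK)]
  refine lintegral_mono fun ω => ?_
  by_cases hω : X ω ∈ K
  · rw [Set.indicator_of_mem (show ω ∈ X ⁻¹' K from hω)]
    exact ENNReal.ofReal_le_ofReal (hUM _)
  · rw [Function.notMem_support.1 fun h => hω (hUK h)]
    simp

lemma measure_lt_setIntegral_le {Ω : Type*} [MeasurableSpace Ω] {P : Measure Ω} [SFinite P]
    {J : Set ℝ} {f : ℝ → Ω → ℝ}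
    (hf : AEMeasurable (Function.uncurry f) ((volume.restrict J).prod P))
    (hf_nonneg : ∀ s ω, 0 ≤ f s ω) {a : ℝ} (ha : 0 < a) :
    P {ω | a < ∫ s in J, f s ω}
      ≤ (∫⁻ s in J, ∫⁻ ω, ENNReal.ofReal (f s ω) ∂P) / ENNReal.ofReal a := by
  set g : Ω → ℝ → ℝ≥0∞ := fun ω s => ENNReal.ofReal (f s ω)
  have hg : AEMeasurable (Function.uncurry g) (P.prod (volume.restrict J)) :=
    hf.ennreal_ofReal.prod_swap
  have hsub : {ω | a < ∫ s in J, f s ω} ⊆ {ω | ENNReal.ofReal a ≤ ∫⁻ s in J, g ω s} := by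
    intro ω hω
    calc ENNReal.ofReal a ≤ ENNReal.ofReal (∫ s in J, f s ω) := ENNReal.ofReal_le_ofReal hω.le
      _ ≤ ‖∫ s in J, f s ω‖ₑ := Real.ofReal_le_enorm _
      _ ≤ ∫⁻ s in J, ‖f s ω‖ₑ := enorm_integral_le_lintegral_enorm _
      _ = ∫⁻ s in J, g ω s := lintegral_congr fun s => Real.enorm_of_nonneg (hf_nonneg s ω)
  calc P {ω | a < ∫ s in J, f s ω}
      ≤ P {ω | ENNReal.ofReal a ≤ ∫⁻ s in J, g ω s} := measure_mono hsub
    _ ≤ (∫⁻ ω, (∫⁻ s in J, g ω s) ∂P) / ENNReal.ofReal a :=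
        meas_ge_le_lintegral_div hg.lintegral_prod_right (by simpa using ha) ENNReal.ofReal_ne_top
    _ = (∫⁻ s in J, ∫⁻ ω, ENNReal.ofReal (f s ω) ∂P) / ENNReal.ofReal a := by
        rw [lintegral_lintegral_swap hg]

lemma aemeasurable_uncurry_of_ae_continuous {Ω E : Type*} [MeasurableSpace Ω]
    [TopologicalSpace E] [TopologicalSpace.PseudoMetrizableSpace E] [MeasurableSpace E]
    [BorelSpace E]
    {P : Measure Ω} {X : ℝ → Ω → E} (hX : ∀ t, Measurable (X t))
    (hX_cont : ∀ᵐ ω ∂P, Continuous fun t => X t ω) (μ : Measure ℝ) :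
    AEMeasurable (Function.uncurry X) (μ.prod P) := by
  classical
  set N := toMeasurable P {ω | ¬Continuous fun t => X t ω}
  have hN : ∀ᵐ ω ∂P, ω ∉ N := by
    rw [← measure_eq_zero_iff_ae_notMem, measure_toMeasurable]
    exact ae_iff.1 hX_cont
  set Y : ℝ → Ω → E := fun t => N.piecewise (X 0) (X t)
  have hY_cont (ω : Ω) : Continuous fun t => Y t ω := by
    by_cases hω : ω ∈ N
    · simpa [Y, hω] using continuous_const
    · simpa [Y, hω] using not_not.1 fun h => hω (subset_toMeasurable _ _ h)
  refine ⟨Function.uncurry Y, measurable_uncurry_of_continuous_of_measurable hY_cont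
    fun t => (hX 0).piecewise (measurableSet_toMeasurable _ _) (hX t), ?_⟩
  filter_upwards [Measure.quasiMeasurePreserving_snd.ae hN] with p hp
  exact (Set.piecewise_eq_of_notMem N _ _ hp).symm

namespace IsBrownianMotion

variable {Ω : Type*} [MeasurableSpace Ω] {d : ℕ} {P : Measure Ω}
  {W : ℝ → Ω → EuclideanSpace ℝ (Fin d)}

lemma indepFun_increments (hW : IsBrownianMotion d P W) {r s t : ℝ} (hr : 0 ≤ r) (hrs : r ≤ s)
    (hst : s ≤ t) : IndepFun (fun ω => W s ω - W r ω) (fun ω => W t ω - W s ω) P := by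
  have hmono : Monotone ![r, s, t] := by
    rw [Fin.monotone_iff_le_succ]
    intro i
    fin_cases i <;> simpa
  simpa using (hW.indep_incr 2 ![r, s, t] hmono hr).indepFun (i := 0) (j := 1) (by decide)

lemma measure_smul_increment_add_smul_mem_closedBall_le (hW : IsBrownianMotion d P W)
    (hd : 3 ≤ d) {r t : ℝ} (hr : 0 ≤ r) (hrt : r < t) {B : Ω → EuclideanSpace ℝ (Fin d)}
    (hB : Measurable B) (hBA : IndepFun B (fun ω => W t ω - W r ω) P) {γ : ℝ} (hγ : 1 / 2 ≤ |γ|)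
    (β : ℝ) {R : ℝ} (hR : 0 ≤ R) :
    P {ω | γ • (W t ω - W r ω) + β • B ω ∈ Metric.closedBall 0 R}
      ≤ ENNReal.ofReal ((4 * R) ^ 3 * (t - r) ^ (-(3 / 2) : ℝ)) := by
  have := hW.isProb
  have htr : 0 ≤ t - r := by linarith
  have hγR : 2 * R / |γ| ≤ 4 * R := by
    rw [div_le_iff₀ (by linarith)]
    nlinarith
  refine (measure_smul_add_smul_mem_closedBall_le ((hW.meas t).sub (hW.meas r)) hB hBA
    (hW.coord_indep r t hr hrt.le) (by simpa using hrt) (hW.gauss_incr r t hr hrt.le)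
    (abs_pos.1 (by linarith)) β R (by simpa)).trans ?_
  rw [Real.coe_toNNReal _ htr, ← ENNReal.ofReal_pow (by positivity), ← div_sqrt_pow_three _ htr]
  exact ENNReal.ofReal_le_ofReal
    (pow_le_pow_left₀ (by positivity) (div_le_div_of_nonneg_right hγR (Real.sqrt_nonneg _)) 3)

lemma measure_bridge_mem_closedBall_le (hW : IsBrownianMotion d P W) (hd : 3 ≤ d) {s T : ℝ}
    (hs : 0 < s) (hsT : s < T) {R : ℝ} (hR : 0 ≤ R) :
    P {ω | W s ω - (s / T) • W T ω ∈ Metric.closedBall 0 R}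
      ≤ ENNReal.ofReal ((4 * R) ^ 3 * (s ^ (-(3 / 2) : ℝ) + (T - s) ^ (-(3 / 2) : ℝ))) := by
  set A := fun ω => W s ω - W 0 ω
  set B := fun ω => W T ω - W s ω
  have hAB : IndepFun A B P := hW.indepFun_increments le_rfl hs.le hsT.le
  have hbridge : ∀ᵐ ω ∂P, W s ω - (s / T) • W T ω = (1 - s / T) • A ω + (-(s / T)) • B ω := by
    filter_upwards [hW.init] with ω h0
    simp only [A, B, h0, sub_zero]
    module
  have hset : {ω | W s ω - (s / T) • W T ω ∈ Metric.closedBall 0 R}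
      =ᵐ[P] {ω | (1 - s / T) • A ω + (-(s / T)) • B ω ∈ Metric.closedBall 0 R} :=
    hbridge.mono fun ω h => congrArg (· ∈ Metric.closedBall 0 R) h
  rw [measure_congr hset]
  have hT : 0 < T := hs.trans hsT
  have hs_rpow : 0 ≤ s ^ (-(3 / 2) : ℝ) := Real.rpow_nonneg hs.le _
  have hTs_rpow : 0 ≤ (T - s) ^ (-(3 / 2) : ℝ) := Real.rpow_nonneg (by linarith) _
  rcases le_or_gt s (T / 2) with hhalf | hhalf
  · have hα : 1 / 2 ≤ |1 - s / T| := by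
      have : s / T ≤ 1 / 2 := by rw [div_le_iff₀ hT]; linarith
      rw [abs_of_nonneg (by linarith)]
      linarith
    refine (hW.measure_smul_increment_add_smul_mem_closedBall_le hd le_rfl hs
      ((hW.meas T).sub (hW.meas s)) hAB.symm hα _ hR).trans (ENNReal.ofReal_le_ofReal ?_)
    rw [sub_zero]
    gcongr
    exact le_add_of_nonneg_right hTs_rpow
  · have hβ : 1 / 2 ≤ |-(s / T)| := by
      rw [abs_neg, abs_of_pos (by positivity), le_div_iff₀ hT]
      linarith
    have hswap : {ω | (1 - s / T) • A ω + (-(s / T)) • B ω ∈ Metric.closedBall 0 R}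
        = {ω | (-(s / T)) • B ω + (1 - s / T) • A ω ∈ Metric.closedBall 0 R} := by
      simp only [add_comm]
    rw [hswap]
    refine (hW.measure_smul_increment_add_smul_mem_closedBall_le hd hs.le hsT
      ((hW.meas s).sub (hW.meas 0)) hAB hβ _ hR).trans (ENNReal.ofReal_le_ofReal ?_)
    gcongr
    exact le_add_of_nonneg_left hs_rpow

lemma lintegral_ofReal_bridge_le (hW : IsBrownianMotion d P W) (hd : 3 ≤ d)
    {U : EuclideanSpace ℝ (Fin d) → ℝ} {M R : ℝ} (hUM : ∀ x, U x ≤ M)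
    (hUR : Function.support U ⊆ Metric.closedBall 0 R) (hR : 0 ≤ R) {s T : ℝ} (hs : 0 < s)
    (hsT : s < T) :
    ∫⁻ ω, ENNReal.ofReal (U (W s ω - (s / T) • W T ω)) ∂P
      ≤ ENNReal.ofReal M
          * ENNReal.ofReal ((4 * R) ^ 3 * (s ^ (-(3 / 2) : ℝ) + (T - s) ^ (-(3 / 2) : ℝ))) :=
  (lintegral_ofReal_comp_le (X := fun ω => W s ω - (s / T) • W T ω)
    ((hW.meas s).sub ((hW.meas T).const_smul (s / T))) hUM measurableSet_closedBall hUR).trans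
    (by gcongr; exact hW.measure_bridge_mem_closedBall_le hd hs hsT hR)

lemma measure_lt_setIntegral_bridge_le (hW : IsBrownianMotion d P W) (hd : 3 ≤ d)
    {U : EuclideanSpace ℝ (Fin d) → ℝ} (hU_meas : Measurable U) (hU_nonneg : ∀ x, 0 ≤ U x)
    {M R : ℝ} (hUM : ∀ x, U x ≤ M) (hUR : Function.support U ⊆ Metric.closedBall 0 R)
    (hR : 0 ≤ R) {a : ℝ} (ha : 0 < a) {m : ℝ} (hm : 0 < m) (T : ℝ) :
    P {ω | a < ∫ s in Set.Ioc m (T - m), U (W s ω - (s / T) • W T ω)}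
      ≤ ENNReal.ofReal (4 * M * (4 * R) ^ 3 / a * m ^ (-(1 / 2) : ℝ)) := by
  have := hW.isProb
  set J := Set.Ioc m (T - m)
  set c := M * (4 * R) ^ 3
  have hM : 0 ≤ M := (hU_nonneg 0).trans (hUM 0)
  have hc : 0 ≤ c := by positivity
  have hX : AEMeasurable (Function.uncurry fun s ω => U (W s ω - (s / T) • W T ω))
      ((volume.restrict J).prod P) := by
    have hWT := hW.meas T
    refine hU_meas.comp_aemeasurable ((aemeasurable_uncurry_of_ae_continuous hW.meas hW.cont _).sub
      (Measurable.aemeasurable ?_))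
    fun_prop
  have hocc : ∀ s ∈ J, ∫⁻ ω, ENNReal.ofReal (U (W s ω - (s / T) • W T ω)) ∂P
      ≤ ENNReal.ofReal c * ENNReal.ofReal (s ^ (-(3 / 2) : ℝ) + (T - s) ^ (-(3 / 2) : ℝ)) :=
    fun s hs => (hW.lintegral_ofReal_bridge_le hd hUM hUR hR (hm.trans hs.1)
      (by linarith [hs.2])).trans_eq
        (by rw [← ENNReal.ofReal_mul hM, ← ENNReal.ofReal_mul hc, mul_assoc])
  calc P {ω | a < ∫ s in J, U (W s ω - (s / T) • W T ω)}
      ≤ (∫⁻ s in J, ∫⁻ ω, ENNReal.ofReal (U (W s ω - (s / T) • W T ω)) ∂P) / ENNReal.ofReal a :=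
        measure_lt_setIntegral_le hX (fun _ _ => hU_nonneg _) ha
    _ ≤ (∫⁻ s in J, ENNReal.ofReal c
          * ENNReal.ofReal (s ^ (-(3 / 2) : ℝ) + (T - s) ^ (-(3 / 2) : ℝ))) / ENNReal.ofReal a := by
        gcongr ?_ / _
        exact setLIntegral_mono' measurableSet_Ioc hocc
    _ ≤ ENNReal.ofReal c * ENNReal.ofReal (2 * (-m ^ (-(3 / 2) + 1 : ℝ) / (-(3 / 2) + 1)))
          / ENNReal.ofReal a := by
        rw [lintegral_const_mul' _ _ ENNReal.ofReal_ne_top]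
        gcongr
        exact lintegral_Ioc_rpow_add_rpow_le (by norm_num) hm T
    _ = ENNReal.ofReal (4 * M * (4 * R) ^ 3 / a * m ^ (-(1 / 2) : ℝ)) := by
        rw [← ENNReal.ofReal_mul hc, ← ENNReal.ofReal_div_of_pos ha]
        congr 1
        norm_num
        ring

end IsBrownianMotion

theorem bridge_middle_occupation_negligible_general {Ω : Type*} [MeasurableSpace Ω]
    {d : ℕ} (hd : 3 ≤ d)
    (P : Measure Ω) (W : ℝ → Ω → EuclideanSpace ℝ (Fin d))
    (hW : IsBrownianMotion d P W)
    (V : EuclideanSpace ℝ (Fin d) → ℝ)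
    (hV_meas : Measurable V) (hV_nonneg : ∀ y, 0 ≤ V y) (hV_bdd : ∃ M : ℝ, ∀ y, V y ≤ M)
    (hV_supp : HasCompactSupport V)
    (a : ℝ) (ha : 0 < a)
    (T m : ℕ → ℝ)
    (hm : Tendsto m atTop atTop) :
    Tendsto (fun n =>
        P {ω | a < ∫ s in Set.Ioc (m n) (T n - m n),
            V (Real.sqrt 2 • (W s ω - (s / T n) • W (T n) ω))})
      atTop (nhds (0 : ℝ≥0∞)) := by
  obtain ⟨M, hM⟩ := hV_bdd
  obtain ⟨R, hR, hVR⟩ := hV_supp.isCompact.isBounded.subset_closedBall_lt 0 0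
  have hUR : Function.support (fun x => V (√2 • x)) ⊆ Metric.closedBall 0 R :=
    support_comp_smul_subset_closedBall ((subset_tsupport V).trans hVR)
      (by rw [abs_of_nonneg (Real.sqrt_nonneg 2)]; exact Real.one_le_sqrt.2 one_le_two)
  set C := 4 * M * (4 * R) ^ 3 / a
  have hbound : ∀ᶠ n in atTop, P {ω | a < ∫ s in Set.Ioc (m n) (T n - m n),
      V (Real.sqrt 2 • (W s ω - (s / T n) • W (T n) ω))}
        ≤ ENNReal.ofReal (C * m n ^ (-(1 / 2) : ℝ)) := by
    filter_upwards [hm.eventually_gt_atTop 0] with n hn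
    exact hW.measure_lt_setIntegral_bridge_le hd (hV_meas.comp (by fun_prop)) (fun _ => hV_nonneg _)
      (fun _ => hM _) hUR hR.le ha hn (T n)
  have hlim : Tendsto (fun n => ENNReal.ofReal (C * m n ^ (-(1 / 2) : ℝ))) atTop (nhds 0) := by
    simpa using ENNReal.tendsto_ofReal
      (((tendsto_rpow_neg_atTop (by norm_num : (0 : ℝ) < 1 / 2)).comp hm).const_mul C)
  exact tendsto_of_tendsto_of_tendsto_of_le_of_le' tendsto_const_nhds hlim
    (Eventually.of_forall fun _ => zero_le) hbound

/-- **Negligible middle-time occupation for the Brownian bridge**: for `d ≥ 3`,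
`V : ℝ^d → [0,∞)` bounded measurable with compact support, `a > 0`, and sequences
`T_n → ∞`, `m_n → ∞` with `m_n ≤ T_n/2` and `m_n/T_n → 0`, the probability
`P(∫_{m_n}^{T_n − m_n} V (√2 X^{(T_n)}_s) ds > a)` tends to `0`, where
`X^{(T)}_s = W_s − (s/T) W_T` is the Brownian bridge. -/
theorem bridge_middle_occupation_negligible {Ω : Type*} [MeasurableSpace Ω]
    {d : ℕ} (hd : 3 ≤ d)
    (P : Measure Ω) (W : ℝ → Ω → EuclideanSpace ℝ (Fin d))
    (hW : IsBrownianMotion d P W)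
    (V : EuclideanSpace ℝ (Fin d) → ℝ)
    (hV_meas : Measurable V) (hV_nonneg : ∀ y, 0 ≤ V y) (hV_bdd : ∃ M : ℝ, ∀ y, V y ≤ M)
    (hV_supp : HasCompactSupport V)
    (a : ℝ) (ha : 0 < a)
    (T m : ℕ → ℝ)
    (hT : Tendsto T atTop atTop) (hm : Tendsto m atTop atTop)
    (hmT : ∀ n, m n ≤ T n / 2)
    (hratio : Tendsto (fun n => m n / T n) atTop (nhds 0)) :
    Tendsto (fun n =>
        P {ω | a < ∫ s in Set.Ioc (m n) (T n - m n),
            V (Real.sqrt 2 • (W s ω - (s / T n) • W (T n) ω))})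
      atTop (nhds (0 : ℝ≥0∞)) :=
  bridge_middle_occupation_negligible_general hd P W hW V hV_meas hV_nonneg hV_bdd hV_supp a ha T m
    hm
end
end

section
/- Lipschitz-type lower bound for the free energy in the Gaussian variables: let (Ω, 𝒜, μ) be a probability space, N ≥ 1, β > 0, and let ψ: Ω → ℝ^N be a bounded measurable map. For ξ ∈ ℝ^N define Z(ξ) := ∫_Ω exp(β⟨ψ(ω), ξ⟩ − (β²/2)|ψ(ω)|²) dμ(ω) and the tilted probability measure dμ̂_ξ := Z(ξ)^{−1} exp(β⟨ψ(·), ξ⟩ − (β²/2)|ψ(·)|²) dμ. Then for all ξ, ξ' ∈ ℝ^N, log Z(ξ) − log Z(ξ') ≥ −β · (∫_Ω ∫_Ω ⟨ψ(ω), ψ(ω')⟩ dμ̂_{ξ'}(ω) dμ̂_{ξ'}(ω'))^{1/2} · |ξ − ξ'|, where the double integral is nonnegative and |·| denotes the Euclidean norm on ℝ^N. -/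
/- The tilted measure `μ̂_{ξ'}` is Mathlib's `μ.tilted` of the exponent at `ξ'`, and
`Z ξ / Z ξ'` is the `μ̂_{ξ'}`-expectation of `exp (β⟨ξ - ξ', ψ⟩)`. By Jensen's inequality its
logarithm is at least `β⟨ξ - ξ', m⟩`, where `m` is the `μ̂_{ξ'}`-mean of `ψ`; the double integral
is `‖m‖²`, and Cauchy–Schwarz finishes. -/

open MeasureTheory Real

section

variable {α : Type*} [MeasurableSpace α] {μ : Measure α}

lemma integrable_exp_of_le [IsFiniteMeasure μ] {f : α → ℝ} (hf : AEStronglyMeasurable f μ)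
    {C : ℝ} (hC : ∀ᵐ x ∂μ, f x ≤ C) : Integrable (fun x ↦ exp (f x)) μ :=
  Integrable.of_bound (continuous_exp.comp_aestronglyMeasurable hf) (exp C) <| by
    filter_upwards [hC] with x hx
    rw [norm_of_nonneg (exp_nonneg _)]
    exact exp_le_exp.2 hx

lemma exp_integral_le_integral_exp [IsProbabilityMeasure μ] {f : α → ℝ} (hf : Integrable f μ)
    (hexp : Integrable (fun x ↦ exp (f x)) μ) : exp (∫ x, f x ∂μ) ≤ ∫ x, exp (f x) ∂μ :=
  convexOn_exp.map_integral_le continuous_exp.continuousOn isClosed_univ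
    (ae_of_all _ fun _ ↦ Set.mem_univ _) hf hexp

lemma log_integral_exp_add_integral_tilted_le [NeZero μ] {f g : α → ℝ}
    (hg : Integrable (fun x ↦ exp (g x)) μ) (hgf : Integrable (fun x ↦ exp (g x + f x)) μ)
    (hf : Integrable f (μ.tilted g)) :
    log (∫ x, exp (g x) ∂μ) + ∫ x, f x ∂(μ.tilted g) ≤ log (∫ x, exp (g x + f x) ∂μ) := by
  have : IsProbabilityMeasure (μ.tilted g) := isProbabilityMeasure_tilted hg
  have hexp_f : Integrable (fun x ↦ exp (f x)) (μ.tilted g) := by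
    simpa only [integrable_tilted_iff hg, smul_eq_mul, ← exp_add] using hgf
  have hZ := integral_exp_pos hg
  have hZ' := integral_exp_pos hgf
  have hjensen := exp_integral_le_integral_exp hf hexp_f
  rw [integral_exp_tilted] at hjensen
  simp only [Pi.add_apply] at hjensen
  rw [← le_log_iff_exp_le (div_pos hZ' hZ), log_div hZ'.ne' hZ.ne'] at hjensen
  linarith

section InnerProductSpace

variable {E : Type*} [NormedAddCommGroup E] [InnerProductSpace ℝ E]

lemma integrable_exp_inner_sub_mul_norm_sq [IsFiniteMeasure μ] {ψ : α → E}
    (hψ : AEStronglyMeasurable ψ μ) {M : ℝ} (hM : ∀ᵐ x ∂μ, ‖ψ x‖ ≤ M) (a : ℝ) {b : ℝ}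
    (hb : 0 ≤ b) (ξ : E) :
    Integrable (fun x ↦ exp (a * inner ℝ (ψ x) ξ - b * ‖ψ x‖ ^ 2)) μ := by
  refine integrable_exp_of_le (C := |a| * (M * ‖ξ‖)) (by fun_prop) ?_
  filter_upwards [hM] with x hx
  have hinner : |inner ℝ (ψ x) ξ| ≤ M * ‖ξ‖ :=
    (abs_real_inner_le_norm _ _).trans (mul_le_mul_of_nonneg_right hx (norm_nonneg ξ))
  have : a * inner ℝ (ψ x) ξ ≤ |a| * (M * ‖ξ‖) :=
    calc a * inner ℝ (ψ x) ξ ≤ |a| * |inner ℝ (ψ x) ξ| := (le_abs_self _).trans (abs_mul _ _).le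
      _ ≤ |a| * (M * ‖ξ‖) := mul_le_mul_of_nonneg_left hinner (abs_nonneg a)
  nlinarith [mul_nonneg hb (sq_nonneg ‖ψ x‖)]

lemma integral_integral_inner_self [CompleteSpace E] {ψ : α → E} (hψ : Integrable ψ μ) :
    ∫ x, ∫ y, (inner ℝ (ψ x) (ψ y) : ℝ) ∂μ ∂μ = ‖∫ x, ψ x ∂μ‖ ^ 2 := by
  simp_rw [integral_inner hψ, real_inner_comm (∫ x, ψ x ∂μ), integral_inner hψ,
    real_inner_self_eq_norm_sq]

lemma log_integral_exp_add_inner_tilted_le [CompleteSpace E] [NeZero μ] {g : α → ℝ} {ψ : α → E}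
    (hg : Integrable (fun x ↦ exp (g x)) μ) (v : E)
    (hgψ : Integrable (fun x ↦ exp (g x + inner ℝ v (ψ x))) μ) (hψ : Integrable ψ (μ.tilted g)) :
    log (∫ x, exp (g x) ∂μ) + inner ℝ v (∫ x, ψ x ∂(μ.tilted g))
      ≤ log (∫ x, exp (g x + inner ℝ v (ψ x)) ∂μ) := by
  rw [← integral_inner hψ]
  exact log_integral_exp_add_integral_tilted_le hg hgψ (hψ.const_inner v)

end InnerProductSpace

end

theorem free_energy_lipschitz_lower_bound_general {Ω : Type*} [MeasurableSpace Ω]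
    (μ : Measure Ω) [IsProbabilityMeasure μ]
    (N : ℕ) (β : ℝ) (hβ : 0 < β)
    (ψ : Ω → EuclideanSpace ℝ (Fin N))
    (hψ_meas : Measurable ψ) (hψ_bdd : ∃ M : ℝ, ∀ ω, ‖ψ ω‖ ≤ M)
    (Z : EuclideanSpace ℝ (Fin N) → ℝ)
    (hZ : Z = fun ξ => ∫ ω, Real.exp (β * (inner ℝ (ψ ω) ξ : ℝ) - β ^ 2 / 2 * ‖ψ ω‖ ^ 2) ∂μ)
    (μhat : EuclideanSpace ℝ (Fin N) → Measure Ω)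
    (hμhat : μhat = fun ξ => μ.withDensity fun ω =>
      ENNReal.ofReal ((Z ξ)⁻¹ * Real.exp (β * (inner ℝ (ψ ω) ξ : ℝ) - β ^ 2 / 2 * ‖ψ ω‖ ^ 2))) :
    ∀ ξ ξ' : EuclideanSpace ℝ (Fin N),
      (0 ≤ ∫ ω, ∫ ω', (inner ℝ (ψ ω) (ψ ω') : ℝ) ∂(μhat ξ') ∂(μhat ξ')) ∧
      Real.log (Z ξ) - Real.log (Z ξ') ≥
        -β * Real.sqrt (∫ ω, ∫ ω', (inner ℝ (ψ ω) (ψ ω') : ℝ) ∂(μhat ξ') ∂(μhat ξ'))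
          * ‖ξ - ξ'‖ := by
  intro ξ ξ'
  obtain ⟨M, hM⟩ := hψ_bdd
  set φ : EuclideanSpace ℝ (Fin N) → Ω → ℝ :=
    fun ξ ω ↦ β * (inner ℝ (ψ ω) ξ : ℝ) - β ^ 2 / 2 * ‖ψ ω‖ ^ 2
  have hZφ : ∀ ξ, Z ξ = ∫ ω, exp (φ ξ ω) ∂μ := fun ξ ↦ by rw [hZ]
  have hμhat_tilted : μhat ξ' = μ.tilted (φ ξ') := by
    simp only [hμhat, Measure.tilted, ← hZφ, div_eq_inv_mul (exp _)]
    rfl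
  have hexp_int (ξ) : Integrable (fun ω ↦ exp (φ ξ ω)) μ :=
    integrable_exp_inner_sub_mul_norm_sq hψ_meas.aestronglyMeasurable (ae_of_all _ hM) β
      (by positivity) ξ
  have : IsProbabilityMeasure (μhat ξ') := hμhat_tilted ▸ isProbabilityMeasure_tilted (hexp_int ξ')
  have hψ_int : Integrable ψ (μhat ξ') :=
    .of_bound hψ_meas.aestronglyMeasurable M (ae_of_all _ hM)
  rw [integral_integral_inner_self hψ_int, sqrt_sq (norm_nonneg _)]
  refine ⟨by positivity, ?_⟩
  have hφ_add (ω) : φ ξ' ω + inner ℝ (β • (ξ - ξ')) (ψ ω) = φ ξ ω := by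
    simp only [φ, real_inner_comm (ψ ω), real_inner_smul_right, inner_sub_right]
    ring
  have hgibbs := log_integral_exp_add_inner_tilted_le (hexp_int ξ') (β • (ξ - ξ'))
    (by simpa only [hφ_add] using hexp_int ξ) (hμhat_tilted ▸ hψ_int)
  simp only [hφ_add, ← hZφ, ← hμhat_tilted] at hgibbs
  have hCS := neg_le_of_abs_le (abs_real_inner_le_norm (β • (ξ - ξ')) (∫ ω, ψ ω ∂(μhat ξ')))
  rw [norm_smul, norm_of_nonneg hβ.le] at hCS
  linarith

/-- **Lipschitz-type lower bound for the free energy in the Gaussian variables**: for a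
probability space `(Ω, μ)`, `β > 0` and a bounded measurable `ψ : Ω → ℝ^N`, with
`Z(ξ) = ∫ exp (β⟨ψ, ξ⟩ − (β²/2)|ψ|²) dμ` and tilted measure
`dμ̂_ξ = Z(ξ)⁻¹ exp (β⟨ψ, ξ⟩ − (β²/2)|ψ|²) dμ`, one has for all `ξ, ξ'`,
`log Z(ξ) − log Z(ξ') ≥ −β (∫∫ ⟨ψ(ω), ψ(ω')⟩ dμ̂_{ξ'} dμ̂_{ξ'})^{1/2} |ξ − ξ'|`,
the double integral being nonnegative. -/
theorem free_energy_lipschitz_lower_bound {Ω : Type*} [MeasurableSpace Ω]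
    (μ : Measure Ω) [IsProbabilityMeasure μ]
    (N : ℕ) (hN : 1 ≤ N) (β : ℝ) (hβ : 0 < β)
    (ψ : Ω → EuclideanSpace ℝ (Fin N))
    (hψ_meas : Measurable ψ) (hψ_bdd : ∃ M : ℝ, ∀ ω, ‖ψ ω‖ ≤ M)
    (Z : EuclideanSpace ℝ (Fin N) → ℝ)
    (hZ : Z = fun ξ => ∫ ω, Real.exp (β * (inner ℝ (ψ ω) ξ : ℝ) - β ^ 2 / 2 * ‖ψ ω‖ ^ 2) ∂μ)
    (μhat : EuclideanSpace ℝ (Fin N) → Measure Ω)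
    (hμhat : μhat = fun ξ => μ.withDensity fun ω =>
      ENNReal.ofReal ((Z ξ)⁻¹ * Real.exp (β * (inner ℝ (ψ ω) ξ : ℝ) - β ^ 2 / 2 * ‖ψ ω‖ ^ 2))) :
    ∀ ξ ξ' : EuclideanSpace ℝ (Fin N),
      (0 ≤ ∫ ω, ∫ ω', (inner ℝ (ψ ω) (ψ ω') : ℝ) ∂(μhat ξ') ∂(μhat ξ')) ∧
      Real.log (Z ξ) - Real.log (Z ξ') ≥
        -β * Real.sqrt (∫ ω, ∫ ω', (inner ℝ (ψ ω) (ψ ω') : ℝ) ∂(μhat ξ') ∂(μhat ξ'))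
          * ‖ξ - ξ'‖ :=
  free_energy_lipschitz_lower_bound_general μ N β hβ ψ hψ_meas hψ_bdd Z hZ μhat hμhat
end
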